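/- arXiv:1311.5186 — 5 statements merged into one kernel-verified Lean document; each statement's English description precedes it below -/
import Mathlib

section
/- Let X and Y be discrete random variables on finite sets, with X uniform on its domain 𝒜 and Y taking values in ℬ. Then there exists a function f : ℬ → {0,1} such that the mutual information satisfies I(X; f(Y)) ≥ I(X;Y) / |ℬ|. -/
/-!
Because `X` is uniform, `I(X;Y) = ∑_b P(Y = b) · D(P_{X|Y=b} ‖ uniform)`, a sum of `|ℬ|`
nonnegative terms, so some `b₀` contributes at least the average `I(X;Y)/|ℬ|`. For `f = 1[Y = b₀]`
the pair `(X, f Y)` still has `X` uniform, and the same decomposition of `I(X; f Y)` consists of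
the `b₀` term unchanged plus a nonnegative term for the event `Y ≠ b₀`.
-/

open Finset

/-- Shannon entropy (base 2) of a finitely supported probability vector. -/
noncomputable def entH {ι : Type*} [Fintype ι] (p : ι → ℝ) : ℝ :=
  ∑ i, -(p i * Real.logb 2 (p i))

/-- Mutual information `I(X;Y) = H(X) + H(Y) - H(X,Y)` of a joint probability
mass function `p` on `A × B`. -/
noncomputable def mutInfo {A B : Type*} [Fintype A] [Fintype B] (p : A × B → ℝ) : ℝ :=
  entH (fun a => ∑ b, p (a, b)) + entH (fun b => ∑ a, p (a, b)) - entH p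

open Real

lemma entH_eq_sum_negMulLog_div {ι : Type*} [Fintype ι] (p : ι → ℝ) :
    entH p = (∑ i, negMulLog (p i)) / log 2 := by
  simp only [entH, logb, negMulLog, sum_div]
  exact sum_congr rfl fun i _ => by ring

lemma sum_negMulLog_le {ι : Type*} [Fintype ι] (s : ι → ℝ) (hs : ∀ i, 0 ≤ s i) :
    ∑ i, negMulLog (s i) ≤ negMulLog (∑ i, s i) + (∑ i, s i) * log (Fintype.card ι) := by
  rcases isEmpty_or_nonempty ι with _ | _
  · simp
  set n : ℝ := (Fintype.card ι : ℝ)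
  have hn : 0 < n := by positivity
  have jensen := concaveOn_negMulLog.le_map_sum (t := univ) (w := fun _ => n⁻¹) (p := s)
    (fun _ _ => by positivity) (by simp [n]) (fun i _ => hs i)
  rw [← smul_sum, ← smul_sum, smul_eq_mul, smul_eq_mul, negMulLog_mul,
    negMulLog, log_inv] at jensen
  have := mul_le_mul_of_nonneg_left jensen hn.le
  field_simp at this
  linarith

lemma entH_le {ι : Type*} [Fintype ι] (s : ι → ℝ) (hs : ∀ i, 0 ≤ s i) :
    entH s ≤ (∑ i, s i) * logb 2 (Fintype.card ι) - (∑ i, s i) * logb 2 (∑ i, s i) := by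
  rw [entH_eq_sum_negMulLog_div, logb, logb, div_le_iff₀ (log_pos one_lt_two)]
  have key := sum_negMulLog_le s hs
  rw [negMulLog] at key
  field_simp
  linarith

/-- For `s ≥ 0` of mass `t`, this is `t · D(s / t ‖ uniform)` in bits, written without division.
-/
noncomputable def divFromUniform {ι : Type*} [Fintype ι] (s : ι → ℝ) : ℝ :=
  (∑ i, s i) * logb 2 (Fintype.card ι) - (∑ i, s i) * logb 2 (∑ i, s i) - entH s

lemma divFromUniform_nonneg {ι : Type*} [Fintype ι] {s : ι → ℝ} (hs : ∀ i, 0 ≤ s i) :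
    0 ≤ divFromUniform s :=
  sub_nonneg.mpr (entH_le s hs)

lemma entH_uniform (ι : Type*) [Fintype ι] :
    entH (fun _ : ι => 1 / (Fintype.card ι : ℝ)) = logb 2 (Fintype.card ι) := by
  rcases isEmpty_or_nonempty ι with _ | _
  · simp [entH]
  simp only [entH, one_div, logb_inv, sum_const, card_univ, nsmul_eq_mul]
  field_simp

theorem mutInfo_eq_sum_divFromUniform {A C : Type*} [Fintype A] [Fintype C] (q : A × C → ℝ)
    (hsum : ∑ x, q x = 1) (hunif : ∀ a, ∑ c, q (a, c) = 1 / Fintype.card A) :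
    mutInfo q = ∑ c, divFromUniform (fun a => q (a, c)) := by
  have hcol : ∑ c, ∑ a, q (a, c) = 1 := by rw [sum_comm, ← Fintype.sum_prod_type, hsum]
  have hjoint : entH q = ∑ c, entH (fun a => q (a, c)) := by
    simp only [entH]
    rw [Fintype.sum_prod_type, sum_comm]
  rw [mutInfo, funext hunif, entH_uniform, hjoint]
  simp only [divFromUniform, sum_sub_distrib, ← sum_mul, hcol, entH, sum_neg_distrib]
  ring

def mapSnd {A B C : Type*} [Fintype B] [DecidableEq C] (p : A × B → ℝ) (f : B → C)
    (ac : A × C) : ℝ :=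
  ∑ b ∈ univ.filter (fun b => f b = ac.2), p (ac.1, b)

lemma sum_mapSnd_row {A B C : Type*} [Fintype B] [Fintype C] [DecidableEq C]
    (p : A × B → ℝ) (f : B → C) (a : A) : ∑ c, mapSnd p f (a, c) = ∑ b, p (a, b) :=
  sum_fiberwise univ f (fun b => p (a, b))

lemma sum_mapSnd {A B C : Type*} [Fintype A] [Fintype B] [Fintype C] [DecidableEq C]
    (p : A × B → ℝ) (f : B → C) : ∑ x, mapSnd p f x = ∑ x, p x := by
  simp only [Fintype.sum_prod_type, sum_mapSnd_row]

lemma divFromUniform_le_mutInfo_mapSnd_indicator {A B : Type*} [Fintype A] [Fintype B]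
    [DecidableEq B] (p : A × B → ℝ) (hnn : ∀ x, 0 ≤ p x) (hsum : ∑ x, p x = 1)
    (hunif : ∀ a : A, ∑ b, p (a, b) = 1 / Fintype.card A) (b₀ : B) :
    divFromUniform (fun a => p (a, b₀)) ≤ mutInfo (mapSnd p (fun b => decide (b = b₀))) := by
  set q := mapSnd p (fun b => decide (b = b₀))
  have hq : mutInfo q =
      divFromUniform (fun a => q (a, true)) + divFromUniform (fun a => q (a, false)) := by
    rw [mutInfo_eq_sum_divFromUniform q (by rw [sum_mapSnd, hsum])
      (fun a => by rw [sum_mapSnd_row, hunif]), Fintype.sum_bool]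
  have htrue : (fun a => q (a, true)) = fun a => p (a, b₀) := by
    funext a
    simp [q, mapSnd, filter_eq']
  rw [hq, htrue]
  exact le_add_of_nonneg_right (divFromUniform_nonneg fun a => sum_nonneg fun b _ => hnn _)

theorem stmt0_general {A B : Type*} [Fintype A] [Fintype B] [Nonempty B]
    (p : A × B → ℝ) (hnn : ∀ x, 0 ≤ p x) (hsum : ∑ x, p x = 1)
    (hunif : ∀ a : A, ∑ b, p (a, b) = 1 / Fintype.card A) :
    ∃ f : B → Bool,
      mutInfo p / Fintype.card B ≤
        mutInfo (fun ac : A × Bool => ∑ b ∈ univ.filter (fun b => f b = ac.2), p (ac.1, b)) := by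
  classical
  obtain ⟨b₀, -, hb₀⟩ :
      ∃ b₀ ∈ univ, mutInfo p / Fintype.card B ≤ divFromUniform (fun a => p (a, b₀)) := by
    apply exists_le_of_sum_le univ_nonempty
    rw [sum_const, card_univ, nsmul_eq_mul, mul_div_cancel₀ _ (by positivity),
      mutInfo_eq_sum_divFromUniform p hsum hunif]
  exact ⟨fun b => decide (b = b₀),
    hb₀.trans (divFromUniform_le_mutInfo_mapSnd_indicator p hnn hsum hunif b₀)⟩

/-- If `X` is uniform on its (finite) domain `A` and `Y` takes values in the finite
set `B`, there is `f : B → {0,1}` with `I(X; f(Y)) ≥ I(X;Y)/|B|`. -/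
theorem stmt0 {A B : Type*} [Fintype A] [Fintype B] [Nonempty A] [Nonempty B]
    [DecidableEq B]
    (p : A × B → ℝ) (hnn : ∀ x, 0 ≤ p x) (hsum : ∑ x, p x = 1)
    (hunif : ∀ a : A, ∑ b, p (a, b) = 1 / Fintype.card A) :
    ∃ f : B → Bool,
      mutInfo p / Fintype.card B ≤
        mutInfo (fun ac : A × Bool => ∑ b ∈ univ.filter (fun b => f b = ac.2), p (ac.1, b)) :=
  stmt0_general p hnn hsum hunif
end

section
/- Let q be a prime, ω a primitive q-th root of unity in ℂ, and let (u_x)_{x∈𝔽_q} and (v_y)_{y∈𝔽_q} be unit vectors in ℂ^n. Then |∑_{x,y∈𝔽_q} ω^{−xy} ⟨u_x, v_y⟩| ≤ q^{3/2}. -/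
/-!
Writing `w x = ∑ y, ω^{-xy} v y`, the sum is `∑ x, ⟪u x, w x⟫`. Orthogonality of the characters
`x ↦ ω^{-xy}` gives Parseval's identity `∑ x, ‖w x‖² = q ∑ y, ‖v y‖² = q²`, so by Cauchy–Schwarz
the sum is at most `∑ x, ‖w x‖ ≤ √(q · q²)`.
-/

open Finset RCLike ComplexConjugate
open scoped InnerProductSpace

section Kernel

variable {𝕜 E ι κ : Type*} [RCLike 𝕜] [NormedAddCommGroup E] [InnerProductSpace 𝕜 E]
  [Fintype ι] [Fintype κ]

lemma norm_sum_inner_le_sqrt_card_mul_sum_sq {u : ι → E} (hu : ∀ i, ‖u i‖ ≤ 1) (w : ι → E) :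
    ‖∑ i, ⟪u i, w i⟫_𝕜‖ ≤ √(Fintype.card ι * ∑ i, ‖w i‖ ^ 2) := by
  calc ‖∑ i, ⟪u i, w i⟫_𝕜‖ ≤ ∑ i, ‖w i‖ := by
        refine (norm_sum_le _ _).trans (sum_le_sum fun i _ => ?_)
        calc ‖⟪u i, w i⟫_𝕜‖ ≤ ‖u i‖ * ‖w i‖ := norm_inner_le_norm _ _
          _ ≤ ‖w i‖ := mul_le_of_le_one_left (norm_nonneg _) (hu i)
    _ ≤ √(Fintype.card ι * ∑ i, ‖w i‖ ^ 2) :=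
        Real.le_sqrt_of_sq_le (sq_sum_le_card_mul_sum_sq (s := univ))

lemma sum_norm_sum_smul_sq_of_orthogonal [DecidableEq κ] {K : ι → κ → 𝕜} {c : ℝ}
    (hK : ∀ j j', ∑ i, conj (K i j) * K i j' = if j = j' then (c : 𝕜) else 0) (v : κ → E) :
    ∑ i, ‖∑ j, K i j • v j‖ ^ 2 = c * ∑ j, ‖v j‖ ^ 2 := by
  apply RCLike.ofReal_injective (K := 𝕜)
  push_cast
  simp_rw [← inner_self_eq_norm_sq_to_K, sum_inner, inner_sum, inner_smul_left, inner_smul_right]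
  calc ∑ i, ∑ j, ∑ j', conj (K i j) * (K i j' * ⟪v j, v j'⟫_𝕜)
      = ∑ j, ∑ j', (∑ i, conj (K i j) * K i j') * ⟪v j, v j'⟫_𝕜 := by
        rw [sum_comm]
        refine sum_congr rfl fun j _ => ?_
        rw [sum_comm]
        simp_rw [sum_mul, mul_assoc]
    _ = (c : 𝕜) * ∑ j, ⟪v j, v j⟫_𝕜 := by
        simp_rw [hK, ite_mul, zero_mul, sum_ite_eq, mem_univ, if_true, mul_sum]

lemma norm_sum_sum_mul_inner_le_of_orthogonal [DecidableEq κ] {K : ι → κ → 𝕜} {c : ℝ}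
    (hc : 0 ≤ c) (hK : ∀ j j', ∑ i, conj (K i j) * K i j' = if j = j' then (c : 𝕜) else 0)
    {u : ι → E} {v : κ → E} (hu : ∀ i, ‖u i‖ ≤ 1) (hv : ∀ j, ‖v j‖ ≤ 1) :
    ‖∑ i, ∑ j, K i j * ⟪u i, v j⟫_𝕜‖ ≤ √(Fintype.card ι * (c * Fintype.card κ)) := by
  have hv2 : ∑ j, ‖v j‖ ^ 2 ≤ Fintype.card κ := by
    simpa using sum_le_sum fun j (_ : j ∈ univ) => pow_le_one₀ (norm_nonneg (v j)) (hv j)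
  calc ‖∑ i, ∑ j, K i j * ⟪u i, v j⟫_𝕜‖
      = ‖∑ i, ⟪u i, ∑ j, K i j • v j⟫_𝕜‖ := by simp_rw [inner_sum, inner_smul_right]
    _ ≤ √(Fintype.card ι * ∑ i, ‖∑ j, K i j • v j‖ ^ 2) :=
        norm_sum_inner_le_sqrt_card_mul_sum_sq hu _
    _ ≤ √(Fintype.card ι * (c * Fintype.card κ)) := by
        rw [sum_norm_sum_smul_sq_of_orthogonal hK]
        gcongr

end Kernel

namespace AddChar

variable {R : Type*} [CommRing R]

lemma IsPrimitive.inv {M : Type*} [DivisionCommMonoid M] {ψ : AddChar R M}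
    (hψ : ψ.IsPrimitive) : ψ⁻¹.IsPrimitive := fun a ha h => by
  rw [inv_mulShift, mulShift_mulShift, neg_one_mul] at h
  exact hψ (neg_ne_zero.mpr ha) h

variable [Fintype R] {𝕜 : Type*} [RCLike 𝕜]

lemma IsPrimitive.sum_conj_apply_mul_mul_apply_mul [DecidableEq R] {ψ : AddChar R 𝕜}
    (hψ : ψ.IsPrimitive) (y y' : R) :
    ∑ x, conj (ψ (x * y)) * ψ (x * y') = if y = y' then (Fintype.card R : 𝕜) else 0 := by
  simp_rw [← map_neg_eq_conj, ← map_add_eq_mul, ← mul_neg, ← mul_add, sum_mulShift _ hψ,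
    neg_add_eq_zero, apply_ite Nat.cast, Nat.cast_zero]

theorem IsPrimitive.norm_sum_apply_mul_inner_le {E : Type*} [NormedAddCommGroup E]
    [InnerProductSpace 𝕜 E] {ψ : AddChar R 𝕜} (hψ : ψ.IsPrimitive) {u v : R → E}
    (hu : ∀ x, ‖u x‖ ≤ 1) (hv : ∀ y, ‖v y‖ ≤ 1) :
    ‖∑ x, ∑ y, ψ (x * y) * ⟪u x, v y⟫_𝕜‖ ≤ (Fintype.card R : ℝ) ^ ((3 : ℝ) / 2) := by
  classical
  set N : ℝ := (Fintype.card R : ℝ)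
  have hK (y y' : R) :
      ∑ x, conj (ψ (x * y)) * ψ (x * y') = if y = y' then (N : 𝕜) else 0 := by
    rw [ofReal_natCast]
    exact hψ.sum_conj_apply_mul_mul_apply_mul y y'
  calc _ ≤ √(N * (N * N)) := norm_sum_sum_mul_inner_le_of_orthogonal (by positivity) hK hu hv
    _ = N ^ ((3 : ℝ) / 2) := by
        rw [show N * (N * N) = N ^ (3 : ℝ) by norm_cast; ring, Real.sqrt_eq_rpow,
          ← Real.rpow_mul (by positivity)]
        norm_num

end AddChar

lemma Complex.exp_two_pi_I_div_zpow_neg_val (q : ℕ) [NeZero q] (a : ZMod q) :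
    exp (2 * Real.pi * I / q) ^ (-(a.val : ℤ)) = (ZMod.stdAddChar (N := q))⁻¹ a := by
  rw [AddChar.inv_apply', ZMod.stdAddChar_apply, ZMod.toCircle_apply, zpow_neg, zpow_natCast,
    ← exp_nat_mul]
  ring_nf

theorem stmt1_general (q n : ℕ) [NeZero q] (u v : ZMod q → EuclideanSpace ℂ (Fin n))
    (hu : ∀ x, ‖u x‖ = 1) (hv : ∀ y, ‖v y‖ = 1) :
    ‖(∑ x : ZMod q, ∑ y : ZMod q,
        Complex.exp (2 * Real.pi * Complex.I / q) ^ (-(((x * y : ZMod q)).val : ℤ)) *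
          ⟪u x, v y⟫_ℂ)‖ ≤ (q : ℝ) ^ ((3 : ℝ) / 2) := by
  simp_rw [Complex.exp_two_pi_I_div_zpow_neg_val]
  simpa [ZMod.card] using (ZMod.isPrimitive_stdAddChar q).inv.norm_sum_apply_mul_inner_le
    (fun x => (hu x).le) (fun y => (hv y).le)

/-- For `q` prime, `ω = e^{2πi/q}` and unit vectors `u_x, v_y ∈ ℂⁿ`,
`|∑_{x,y∈𝔽_q} ω^{-xy} ⟨u_x, v_y⟩| ≤ q^{3/2}`. -/
theorem stmt1 (q n : ℕ) [NeZero q] (hq : q.Prime) (u v : ZMod q → EuclideanSpace ℂ (Fin n))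
    (hu : ∀ x, ‖u x‖ = 1) (hv : ∀ y, ‖v y‖ = 1) :
    ‖(∑ x : ZMod q, ∑ y : ZMod q,
        Complex.exp (2 * Real.pi * Complex.I / q) ^ (-(((x * y : ZMod q)).val : ℤ)) *
          ⟪u x, v y⟫_ℂ)‖ ≤ (q : ℝ) ^ ((3 : ℝ) / 2) :=
  stmt1_general q n u v hu hv
end

section
/- Let p be a prime and q = p sufficiently large. Let P = {(x,y) ∈ 𝔽_q² : x is represented by an integer in [0, ⌊q^{1/3}⌋), y by an integer in [0, ⌊q^{2/3}⌋)} and L the set of lines y = cx + d with c represented in [0, ⌊q^{1/3}⌋/2) and d in [0, ⌊q^{2/3}⌋/2). Then |P| ≤ q, |L| ≤ q, and the number of incidences between P and L is Θ(q^{4/3}): in particular for every line ℓ ∈ L, every x-coordinate in [0, ⌊q^{1/3}⌋) gives a point of P on ℓ, so |I(P,L)| ≥ |L| · ⌊q^{1/3}⌋ = Ω(q^{4/3}). -/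
/-! With `a = ⌊p^{1/3}⌋` and `b = ⌊p^{2/3}⌋` we have `a² ≤ b ≤ p`, so for `c < a/2`, `x < a`,
`d < b/2` the integer `c x + d` is less than `b`: it does not wrap around modulo `p` and `(x, c x + d)`
lies in `P`. Thus every line of `L` meets `P` exactly once above each of the `a` abscissas, and
`|I(P, L)| = a ⌊a/2⌋ ⌊b/2⌋`, which lies between `p^{4/3}/32` and `p^{4/3}` once `p ≥ 64`. -/

open Finset

section Incidences

variable {R : Type*} [Add R] [Mul R] [DecidableEq R]

/-- Point-line incidences, where the pair `(c, d)` stands for the line `y = c x + d`. -/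
def incidences (P L : Finset (R × R)) : Finset ((R × R) × (R × R)) :=
  (P ×ˢ L).filter fun zl => zl.1.2 = zl.2.1 * zl.1.1 + zl.2.2

theorem card_incidences_prod {X Y : Finset R} {L : Finset (R × R)}
    (hL : ∀ l ∈ L, ∀ x ∈ X, l.1 * x + l.2 ∈ Y) :
    #(incidences (X ×ˢ Y) L) = #X * #L := by
  rw [← card_product]
  refine card_nbij' (fun zl => (zl.1.1, zl.2)) (fun xl => ((xl.1, xl.2.1 * xl.1 + xl.2.2), xl.2))
    ?_ ?_ ?_ ?_
  · rintro ⟨z, l⟩ hzl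
    simp only [incidences, mem_coe, mem_filter, mem_product] at hzl ⊢
    exact ⟨hzl.1.1.1, hzl.1.2⟩
  · rintro ⟨x, l⟩ hxl
    obtain ⟨hx, hl⟩ := mem_product.mp hxl
    simp only [incidences, mem_coe, mem_filter, mem_product]
    exact ⟨⟨⟨hx, hL l hl x hx⟩, hl⟩, trivial⟩
  · rintro ⟨⟨x, y⟩, l⟩ hzl
    simp only [incidences, mem_coe, mem_filter] at hzl
    simp [hzl.2]
  · intro xl _
    rfl

end Incidences

def smallResidues (p n : ℕ) [NeZero p] : Finset (ZMod p) :=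
  univ.filter fun x => x.val < n

section SmallResidues

variable {p : ℕ} [NeZero p]

theorem card_smallResidues {n : ℕ} (hn : n ≤ p) : #(smallResidues p n) = n := by
  rw [← card_range n]
  refine card_nbij' ZMod.val (fun m => (m : ZMod p)) ?_ ?_ ?_ ?_
  · intro x hx
    simpa [smallResidues] using hx
  · intro m hm
    simp only [coe_range, Set.mem_Iio] at hm
    simpa [smallResidues, ZMod.val_cast_of_lt (hm.trans_le hn)] using hm
  · intro x _
    simp
  · intro m hm
    simp only [coe_range, Set.mem_Iio] at hm
    exact ZMod.val_cast_of_lt (hm.trans_le hn)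

theorem mul_add_mem_smallResidues {a b : ℕ} (hab : a * a ≤ b) (hbp : b ≤ p) {c x d : ZMod p}
    (hc : c ∈ smallResidues p (a / 2)) (hx : x ∈ smallResidues p a)
    (hd : d ∈ smallResidues p (b / 2)) : c * x + d ∈ smallResidues p b := by
  simp only [smallResidues, mem_filter, mem_univ, true_and] at hc hx hd ⊢
  have hcx : c.val * x.val * 2 ≤ b :=
    calc c.val * x.val * 2 ≤ a / 2 * 2 * a := by nlinarith
      _ ≤ a * a := Nat.mul_le_mul_right a (Nat.div_mul_le_self a 2)
      _ ≤ b := hab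
  have hsum : c.val * x.val + d.val < b := by omega
  have hmul : (c * x).val = c.val * x.val := ZMod.val_mul_of_lt (by omega)
  rw [ZMod.val_add_of_lt (by omega), hmul]
  exact hsum

theorem filter_val_lt_eq_smallResidues_prod (a b : ℕ) :
    univ.filter (fun z : ZMod p × ZMod p => z.1.val < a ∧ z.2.val < b) =
      smallResidues p a ×ˢ smallResidues p b := by
  ext
  simp [smallResidues]

theorem filter_incident_eq_incidences (a b a' b' : ℕ) :
    univ.filter (fun zl : (ZMod p × ZMod p) × (ZMod p × ZMod p) =>
        (zl.1.1.val < a ∧ zl.1.2.val < b) ∧ (zl.2.1.val < a' ∧ zl.2.2.val < b') ∧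
          zl.1.2 = zl.2.1 * zl.1.1 + zl.2.2) =
      incidences (smallResidues p a ×ˢ smallResidues p b)
        (smallResidues p a' ×ˢ smallResidues p b') := by
  ext
  simp [incidences, smallResidues, and_assoc]

theorem card_smallResidues_prod {a b : ℕ} (ha : a ≤ p) (hb : b ≤ p) :
    #(smallResidues p a ×ˢ smallResidues p b) = a * b := by
  rw [card_product, card_smallResidues ha, card_smallResidues hb]

theorem card_incidences_smallResidues {a b : ℕ} (hab : a * a ≤ b) (hbp : b ≤ p) :
    #(incidences (smallResidues p a ×ˢ smallResidues p b)
        (smallResidues p (a / 2) ×ˢ smallResidues p (b / 2))) = a * (a / 2 * (b / 2)) := by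
  have hap : a ≤ p := (Nat.le_mul_self a).trans (hab.trans hbp)
  rw [card_incidences_prod, card_smallResidues hap,
    card_smallResidues_prod ((Nat.div_le_self a 2).trans hap) ((Nat.div_le_self b 2).trans hbp)]
  intro l hl x hx
  obtain ⟨hc, hd⟩ := mem_product.mp hl
  exact mul_add_mem_smallResidues hab hbp hc hx hd

end SmallResidues

section Floor

variable {x : ℝ}

theorem floor_mul_floor_le_floor_sq (hx : 0 ≤ x) : ⌊x⌋₊ * ⌊x⌋₊ ≤ ⌊x ^ 2⌋₊ := by
  apply Nat.le_floor
  push_cast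
  rw [sq]
  exact mul_self_le_mul_self (Nat.cast_nonneg _) (Nat.floor_le hx)

theorem floor_mul_floor_sq_le (hx : 0 ≤ x) : (⌊x⌋₊ * ⌊x ^ 2⌋₊ : ℝ) ≤ x ^ 3 := by
  rw [pow_succ' x 2]
  exact mul_le_mul (Nat.floor_le hx) (Nat.floor_le (by positivity)) (Nat.cast_nonneg _) hx

theorem floor_sq_le_cube (hx : 1 ≤ x) : (⌊x ^ 2⌋₊ : ℝ) ≤ x ^ 3 :=
  (Nat.floor_le (by positivity)).trans (pow_le_pow_right₀ hx (by norm_num))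

theorem div_four_le_floor_div_two (hx : 4 ≤ x) : x / 4 ≤ ((⌊x⌋₊ / 2 : ℕ) : ℝ) := by
  have hfloor : x - 1 < ⌊x⌋₊ := Nat.sub_one_lt_floor x
  have hhalf : (⌊x⌋₊ : ℝ) ≤ 2 * ((⌊x⌋₊ / 2 : ℕ) : ℝ) + 1 := by
    exact_mod_cast (show ⌊x⌋₊ ≤ 2 * (⌊x⌋₊ / 2) + 1 by omega)
  linarith

theorem floor_mul_floor_div_two_le (hx : 0 ≤ x) :
    ((⌊x⌋₊ * (⌊x⌋₊ / 2 * (⌊x ^ 2⌋₊ / 2)) : ℕ) : ℝ) ≤ x ^ 4 := by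
  have hdiv : ⌊x⌋₊ * (⌊x⌋₊ / 2 * (⌊x ^ 2⌋₊ / 2)) ≤ ⌊x⌋₊ * (⌊x⌋₊ * ⌊x ^ 2⌋₊) :=
    Nat.mul_le_mul_left _ (Nat.mul_le_mul (Nat.div_le_self _ 2) (Nat.div_le_self _ 2))
  calc ((⌊x⌋₊ * (⌊x⌋₊ / 2 * (⌊x ^ 2⌋₊ / 2)) : ℕ) : ℝ)
      ≤ (⌊x⌋₊ : ℝ) * (⌊x⌋₊ * ⌊x ^ 2⌋₊) := by exact_mod_cast hdiv
    _ ≤ x * x ^ 3 :=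
        mul_le_mul (Nat.floor_le hx) (floor_mul_floor_sq_le hx) (by positivity) hx
    _ = x ^ 4 := by ring

theorem le_floor_mul_floor_div_two (hx : 4 ≤ x) :
    x ^ 4 / 32 ≤ ((⌊x⌋₊ * (⌊x⌋₊ / 2 * (⌊x ^ 2⌋₊ / 2)) : ℕ) : ℝ) := by
  have ha : x / 2 ≤ ⌊x⌋₊ := by linarith [Nat.sub_one_lt_floor x]
  have hc : x / 4 ≤ ((⌊x⌋₊ / 2 : ℕ) : ℝ) := div_four_le_floor_div_two hx
  have hd : x ^ 2 / 4 ≤ ((⌊x ^ 2⌋₊ / 2 : ℕ) : ℝ) := div_four_le_floor_div_two (by nlinarith)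
  push_cast
  calc x ^ 4 / 32 = x / 2 * (x / 4 * (x ^ 2 / 4)) := by ring
    _ ≤ _ := by gcongr

end Floor

theorem Real.rpow_natCast_div_three (n : ℕ) {t : ℝ} (ht : 0 ≤ t) :
    t ^ ((n : ℝ) / 3) = (t ^ ((1 : ℝ) / 3)) ^ n := by
  rw [← Real.rpow_natCast, ← Real.rpow_mul ht, one_div_mul_eq_div]
/-- For `q = p` a sufficiently large prime, the grid of points with coordinates in
`[0,⌊q^{1/3}⌋) × [0,⌊q^{2/3}⌋)` and the lines `y = cx + d` with `c ∈ [0,⌊q^{1/3}⌋/2)`,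
`d ∈ [0,⌊q^{2/3}⌋/2)` satisfy `|P| ≤ q`, `|L| ≤ q`, every line of `L` meets `P` in at least
`⌊q^{1/3}⌋` points of `P` (so `|I(P,L)| ≥ |L|·⌊q^{1/3}⌋`), and `|I(P,L)| = Θ(q^{4/3})`. -/
theorem stmt6 :
    ∃ c C : ℝ, 0 < c ∧ ∃ N : ℕ, ∀ (p : ℕ) [NeZero p], p.Prime → N ≤ p →
      ((Finset.univ.filter fun z : ZMod p × ZMod p =>
          z.1.val < ⌊(p : ℝ) ^ ((1 : ℝ) / 3)⌋₊ ∧ z.2.val < ⌊(p : ℝ) ^ ((2 : ℝ) / 3)⌋₊).card ≤ p) ∧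
      ((Finset.univ.filter fun l : ZMod p × ZMod p =>
          l.1.val < ⌊(p : ℝ) ^ ((1 : ℝ) / 3)⌋₊ / 2 ∧
            l.2.val < ⌊(p : ℝ) ^ ((2 : ℝ) / 3)⌋₊ / 2).card ≤ p) ∧
      ((Finset.univ.filter fun l : ZMod p × ZMod p =>
          l.1.val < ⌊(p : ℝ) ^ ((1 : ℝ) / 3)⌋₊ / 2 ∧
            l.2.val < ⌊(p : ℝ) ^ ((2 : ℝ) / 3)⌋₊ / 2).card * ⌊(p : ℝ) ^ ((1 : ℝ) / 3)⌋₊ ≤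
        (Finset.univ.filter fun zl : (ZMod p × ZMod p) × (ZMod p × ZMod p) =>
          (zl.1.1.val < ⌊(p : ℝ) ^ ((1 : ℝ) / 3)⌋₊ ∧ zl.1.2.val < ⌊(p : ℝ) ^ ((2 : ℝ) / 3)⌋₊) ∧
          (zl.2.1.val < ⌊(p : ℝ) ^ ((1 : ℝ) / 3)⌋₊ / 2 ∧
            zl.2.2.val < ⌊(p : ℝ) ^ ((2 : ℝ) / 3)⌋₊ / 2) ∧
          zl.1.2 = zl.2.1 * zl.1.1 + zl.2.2).card) ∧
      (c * (p : ℝ) ^ ((4 : ℝ) / 3) ≤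
        ((Finset.univ.filter fun zl : (ZMod p × ZMod p) × (ZMod p × ZMod p) =>
          (zl.1.1.val < ⌊(p : ℝ) ^ ((1 : ℝ) / 3)⌋₊ ∧ zl.1.2.val < ⌊(p : ℝ) ^ ((2 : ℝ) / 3)⌋₊) ∧
          (zl.2.1.val < ⌊(p : ℝ) ^ ((1 : ℝ) / 3)⌋₊ / 2 ∧
            zl.2.2.val < ⌊(p : ℝ) ^ ((2 : ℝ) / 3)⌋₊ / 2) ∧
          zl.1.2 = zl.2.1 * zl.1.1 + zl.2.2).card : ℝ)) ∧
      (((Finset.univ.filter fun zl : (ZMod p × ZMod p) × (ZMod p × ZMod p) =>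
          (zl.1.1.val < ⌊(p : ℝ) ^ ((1 : ℝ) / 3)⌋₊ ∧ zl.1.2.val < ⌊(p : ℝ) ^ ((2 : ℝ) / 3)⌋₊) ∧
          (zl.2.1.val < ⌊(p : ℝ) ^ ((1 : ℝ) / 3)⌋₊ / 2 ∧
            zl.2.2.val < ⌊(p : ℝ) ^ ((2 : ℝ) / 3)⌋₊ / 2) ∧
          zl.1.2 = zl.2.1 * zl.1.1 + zl.2.2).card : ℝ) ≤ C * (p : ℝ) ^ ((4 : ℝ) / 3)) := by
  refine ⟨1 / 32, 1, by norm_num, 64, fun p _ _ hp => ?_⟩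
  have hp0 : (0 : ℝ) ≤ p := Nat.cast_nonneg p
  have hx3 : (p : ℝ) = ((p : ℝ) ^ ((1 : ℝ) / 3)) ^ 3 := by
    rw [← Real.rpow_natCast_div_three 3 hp0]; norm_num
  rw [show (2 : ℝ) / 3 = ((2 : ℕ) : ℝ) / 3 by norm_num,
    show (4 : ℝ) / 3 = ((4 : ℕ) : ℝ) / 3 by norm_num, Real.rpow_natCast_div_three 2 hp0,
    Real.rpow_natCast_div_three 4 hp0, filter_val_lt_eq_smallResidues_prod, filter_val_lt_eq_smallResidues_prod, filter_incident_eq_incidences]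
  set x := (p : ℝ) ^ ((1 : ℝ) / 3)
  have hx4 : 4 ≤ x := le_of_pow_le_pow_left₀ three_ne_zero (by positivity) <| by
    rw [← hx3]; exact_mod_cast (show 4 ^ 3 ≤ p by omega)
  have hab : ⌊x⌋₊ * ⌊x⌋₊ ≤ ⌊x ^ 2⌋₊ := floor_mul_floor_le_floor_sq (by positivity)
  have hbp : ⌊x ^ 2⌋₊ ≤ p := by exact_mod_cast hx3 ▸ floor_sq_le_cube (by linarith)
  have hap : ⌊x⌋₊ ≤ p := (Nat.le_mul_self _).trans (hab.trans hbp)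
  have habp : ⌊x⌋₊ * ⌊x ^ 2⌋₊ ≤ p := by exact_mod_cast hx3 ▸ floor_mul_floor_sq_le (by positivity)
  rw [card_incidences_smallResidues hab hbp, card_smallResidues_prod hap hbp,
    card_smallResidues_prod ((Nat.div_le_self _ 2).trans hap) ((Nat.div_le_self _ 2).trans hbp),
    one_div_mul_eq_div, one_mul]
  exact ⟨habp, (Nat.mul_le_mul (Nat.div_le_self _ 2) (Nat.div_le_self _ 2)).trans habp,
    (Nat.mul_comm _ _).le, le_floor_mul_floor_div_two hx4,
    floor_mul_floor_div_two_le (by positivity)⟩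
end

section
/- Let q be a prime power and suppose a (classical, shared-randomness) strategy wins the CHSH_q game with probability p_win. Then there is a strategy with the same winning probability p_win that is regular: for every input pair (x,y) and every k ∈ 𝔽_q \ {0}, the probability that the outputs satisfy a + b = xy + k equals (1 − p_win)/(q − 1). In particular, conditioning-free: the distribution of the error a + b − xy on 𝔽_q \ {0} is uniform given any (x,y). -/
/-!
Feed the strategy the inputs `(αx + γ, βy + δ)` for shared uniform `α, β ∈ 𝔽ˣ`, `γ, δ ∈ 𝔽`, and
correct the outputs affinely so that the error `a + b - xy` becomes the original error divided
by `αβ`. The shifted inputs are uniform on `𝔽²` whatever `(x, y)` is, so on every input pair the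
new error is distributed as `e (αβ)⁻¹`, where `e` is the original error under uniform inputs.
This keeps the probability of error `0` and spreads every nonzero error uniformly over `𝔽ˣ`.
-/

open Finset

noncomputable section

namespace CHSH

variable {F S : Type*} [Field F]

section Units

variable [Fintype F] [DecidableEq F]

theorem sum_units_eq_sum_sub_zero (f : F → ℝ) : ∑ u : Fˣ, f u = ∑ e, f e - f 0 := by
  rw [eq_sub_iff_add_eq, ← sum_compl_add_sum ({0} : Finset F), sum_singleton, add_left_inj]
  have hval : univ.map ⟨((↑) : Fˣ → F), Units.val_injective⟩ = {0}ᶜ := by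
    ext e; simp [← isUnit_iff_ne_zero, IsUnit]
  rw [← hval, sum_map]
  rfl

theorem sum_units_sum_units_mul (f : F → ℝ) {k : F} (hk : k ≠ 0) :
    ∑ α : Fˣ, ∑ β : Fˣ, f (k * α * β) = Fintype.card Fˣ * (∑ e, f e - f 0) := by
  have hα (α : Fˣ) : ∑ β : Fˣ, f (k * α * β) = ∑ β : Fˣ, f β :=
    Equiv.sum_comp (Equiv.mulLeft (Units.mk0 k hk * α)) fun β : Fˣ => f β
  simp [hα, sum_units_eq_sum_sub_zero, mul_sub]

end Units

def regA (A : S → F → F) : (Fˣ × Fˣ × F × F) × S → F → F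
  | ((α, β, γ, δ), ρ), x => (A ρ (α * x + γ) - δ * α * x - γ * δ) / (α * β)

def regB (B : S → F → F) : (Fˣ × Fˣ × F × F) × S → F → F
  | ((α, β, γ, δ), ρ), y => (B ρ (β * y + δ) - β * γ * y) / (α * β)

theorem regA_add_regB_eq_iff (A B : S → F → F) (α β : Fˣ) (γ δ : F) (ρ : S) (x y k : F) :
    regA A ((α, β, γ, δ), ρ) x + regB B ((α, β, γ, δ), ρ) y = x * y + k ↔
      A ρ (α * x + γ) + B ρ (β * y + δ) = (α * x + γ) * (β * y + δ) + k * α * β := by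
  rw [regA, regB, ← add_div, div_eq_iff (mul_ne_zero α.ne_zero β.ne_zero)]
  constructor <;> intro h <;> linear_combination h

variable [DecidableEq F] [Fintype S]

def errorProb (r : S → ℝ) (A B : S → F → F) (x y k : F) : ℝ :=
  ∑ ρ, r ρ * if A ρ x + B ρ y = x * y + k then 1 else 0

theorem errorProb_comp_equiv {S' : Type*} [Fintype S'] (e : S' ≃ S) (r : S → ℝ)
    (A B : S → F → F) : errorProb (r ∘ e) (A ∘ e) (B ∘ e) = errorProb r A B := by
  funext x y k
  exact e.sum_comp fun ρ => r ρ * if A ρ x + B ρ y = x * y + k then 1 else 0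

variable [Fintype F]

def meanErrorProb (r : S → ℝ) (A B : S → F → F) (k : F) : ℝ :=
  ((Fintype.card F : ℝ) ^ 2)⁻¹ * ∑ x, ∑ y, errorProb r A B x y k

theorem sum_errorProb (r : S → ℝ) (A B : S → F → F) (x y : F) :
    ∑ k, errorProb r A B x y k = ∑ ρ, r ρ := by
  simp only [errorProb, ← sub_eq_iff_eq_add', mul_ite, mul_one, mul_zero]
  rw [sum_comm]
  simp

theorem sum_meanErrorProb (r : S → ℝ) (A B : S → F → F) :
    ∑ k, meanErrorProb r A B k = ∑ ρ, r ρ := by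
  have hq : (Fintype.card F : ℝ) ≠ 0 := by positivity
  simp only [meanErrorProb, ← mul_sum]
  rw [sum_comm]
  simp only [sum_comm (γ := F) (f := fun k y => errorProb r A B _ y k), sum_errorProb,
    sum_const, card_univ, nsmul_eq_mul]
  field_simp

def regWeight (r : S → ℝ) (t : (Fˣ × Fˣ × F × F) × S) : ℝ :=
  r t.2 / Fintype.card (Fˣ × Fˣ × F × F)

theorem sum_regWeight (r : S → ℝ) : ∑ t : (Fˣ × Fˣ × F × F) × S, regWeight r t = ∑ ρ, r ρ := by
  have hN : (Fintype.card (Fˣ × Fˣ × F × F) : ℝ) ≠ 0 := by positivity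
  rw [Fintype.sum_prod_type]
  simp only [regWeight, ← sum_div, sum_const, card_univ, nsmul_eq_mul]
  field_simp

theorem errorProb_regularize (r : S → ℝ) (A B : S → F → F) (x y k : F) :
    errorProb (regWeight r) (regA A) (regB B) x y k =
      ((Fintype.card Fˣ : ℝ) ^ 2)⁻¹ * ∑ α : Fˣ, ∑ β : Fˣ, meanErrorProb r A B (k * α * β) := by
  simp only [errorProb, Fintype.sum_prod_type, regWeight, regA_add_regB_eq_iff]
  have hshift (α β : Fˣ) :
      ∑ γ, ∑ δ, errorProb r A B (α * x + γ) (β * y + δ) (k * α * β) =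
        (Fintype.card F : ℝ) ^ 2 * meanErrorProb r A B (k * α * β) := by
    rw [meanErrorProb, mul_inv_cancel_left₀ (by positivity)]
    exact (Equiv.sum_comp (Equiv.addLeft _) fun u => ∑ δ, errorProb r A B u (β * y + δ) _).trans
      (sum_congr rfl fun u _ => Equiv.sum_comp (Equiv.addLeft _) fun v => errorProb r A B u v _)
  calc _ = (Fintype.card (Fˣ × Fˣ × F × F) : ℝ)⁻¹ *
        ∑ α : Fˣ, ∑ β : Fˣ, ∑ γ, ∑ δ, errorProb r A B (α * x + γ) (β * y + δ) (k * α * β) := by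
        simp only [errorProb, mul_sum, div_eq_inv_mul, mul_assoc]
    _ = _ := by
        simp only [hshift, ← mul_sum, Fintype.card_prod]
        push_cast
        field_simp

theorem errorProb_regularize_zero (r : S → ℝ) (A B : S → F → F) (x y : F) :
    errorProb (regWeight r) (regA A) (regB B) x y 0 = meanErrorProb r A B 0 := by
  have hU : (Fintype.card Fˣ : ℝ) ≠ 0 := by positivity
  simp only [errorProb_regularize, zero_mul, sum_const, card_univ, nsmul_eq_mul]
  field_simp

theorem errorProb_regularize_of_ne_zero (r : S → ℝ) (A B : S → F → F) (x y : F) {k : F}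
    (hk : k ≠ 0) :
    errorProb (regWeight r) (regA A) (regB B) x y k =
      (∑ ρ, r ρ - meanErrorProb r A B 0) / ((Fintype.card F : ℝ) - 1) := by
  have hq : (1 : ℝ) < Fintype.card F := by exact_mod_cast Fintype.one_lt_card
  have hU : (Fintype.card Fˣ : ℝ) = Fintype.card F - 1 := by
    rw [Fintype.card_units, Nat.cast_sub Fintype.card_pos, Nat.cast_one]
  rw [errorProb_regularize, sum_units_sum_units_mul _ hk, sum_meanErrorProb, hU]
  have : (Fintype.card F : ℝ) - 1 ≠ 0 := by linarith
  field_simp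

theorem meanErrorProb_regularize_zero (r : S → ℝ) (A B : S → F → F) :
    meanErrorProb (regWeight r) (regA A) (regB B) 0 = meanErrorProb r A B 0 := by
  have hq : (Fintype.card F : ℝ) ≠ 0 := by positivity
  simp only [meanErrorProb, errorProb_regularize_zero, sum_const, card_univ, nsmul_eq_mul]
  field_simp

end CHSH

open CHSH

theorem stmt12_general {F : Type*} [Field F] [Fintype F] [DecidableEq F]
    (q : ℕ) (hF : Fintype.card F = q)
    {R : Type*} [Fintype R] (r : R → ℝ) (hr0 : ∀ ρ, 0 ≤ r ρ) (hr1 : ∑ ρ, r ρ = 1)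
    (A B : R → F → F)
    (pwin : ℝ)
    (hpwin : pwin = ((q : ℝ) ^ 2)⁻¹ *
      ∑ x : F, ∑ y : F, ∑ ρ, r ρ * (if A ρ x + B ρ y = x * y then 1 else 0)) :
    ∃ (n : ℕ) (r' : Fin n → ℝ) (A' B' : Fin n → F → F),
      (∀ ρ, 0 ≤ r' ρ) ∧ (∑ ρ, r' ρ = 1) ∧
      (((q : ℝ) ^ 2)⁻¹ *
          ∑ x : F, ∑ y : F, ∑ ρ, r' ρ * (if A' ρ x + B' ρ y = x * y then 1 else 0)
        = pwin) ∧
      (∀ x y : F, ∀ k : F, k ≠ 0 →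
        ∑ ρ, r' ρ * (if A' ρ x + B' ρ y = x * y + k then 1 else 0)
          = (1 - pwin) / ((q : ℝ) - 1)) := by
  subst hF
  have hpwin' : pwin = meanErrorProb r A B 0 := by
    simp only [hpwin, meanErrorProb, errorProb, add_zero]
  let e := (Fintype.equivFin ((Fˣ × Fˣ × F × F) × R)).symm
  have hreindex := errorProb_comp_equiv e (regWeight r) (regA A) (regB B)
  refine ⟨_, regWeight r ∘ e, regA A ∘ e, regB B ∘ e,
    fun _ => div_nonneg (hr0 _) (Nat.cast_nonneg _), ?_, ?_, ?_⟩
  · exact (e.sum_comp (regWeight r)).trans ((sum_regWeight r).trans hr1)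
  · have h := meanErrorProb_regularize_zero r A B
    rw [meanErrorProb, ← hreindex] at h
    simpa only [errorProb, add_zero, ← hpwin'] using h
  · intro x y k hk
    have h := errorProb_regularize_of_ne_zero r A B x y hk
    rw [← hreindex, hr1, ← hpwin'] at h
    exact h

/-- Regularization lemma for CHSH_q: any classical shared-randomness strategy
(randomness distribution `r`, response functions `A`, `B`) with winning probability
`p_win` can be replaced by a strategy with the same winning probability which is
regular: on every input pair `(x,y)`, each nonzero error `k` occurs with probability
exactly `(1 − p_win)/(q − 1)`. -/
theorem stmt12 {F : Type*} [Field F] [Fintype F] [DecidableEq F]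
    (q : ℕ) (hq : IsPrimePow q) (hF : Fintype.card F = q)
    {R : Type*} [Fintype R] (r : R → ℝ) (hr0 : ∀ ρ, 0 ≤ r ρ) (hr1 : ∑ ρ, r ρ = 1)
    (A B : R → F → F)
    (pwin : ℝ)
    (hpwin : pwin = ((q : ℝ) ^ 2)⁻¹ *
      ∑ x : F, ∑ y : F, ∑ ρ, r ρ * (if A ρ x + B ρ y = x * y then 1 else 0)) :
    ∃ (n : ℕ) (r' : Fin n → ℝ) (A' B' : Fin n → F → F),
      (∀ ρ, 0 ≤ r' ρ) ∧ (∑ ρ, r' ρ = 1) ∧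
      (((q : ℝ) ^ 2)⁻¹ *
          ∑ x : F, ∑ y : F, ∑ ρ, r' ρ * (if A' ρ x + B' ρ y = x * y then 1 else 0)
        = pwin) ∧
      (∀ x y : F, ∀ k : F, k ≠ 0 →
        ∑ ρ, r' ρ * (if A' ρ x + B' ρ y = x * y + k then 1 else 0)
          = (1 - pwin) / ((q : ℝ) - 1)) :=
  stmt12_general q hF r hr0 hr1 A B pwin hpwin
end
end

section
/- For any real t with 0 ≤ t ≤ 1 and integer q ≥ 2 with t ≤ 1/(2q): (1/q)(1 + (q−1)t)·log₂(1 + (q−1)t) + ((q−1)/q)(1 − t)·log₂(1 − t) ≥ c·t² / q for some absolute constant c > 0 (e.g. c = 1/8 works). -/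
open Real Finset

/-!
With `x = 1 + (q - 1) t`, the sharpened bound `log x ≥ y + y² / 2` for `y = 1 - x⁻¹` (two terms
of the series of `-log (1 - y)`) gives `x log x ≥ (q - 1) t + ((q - 1) t)² / (2x)`, while
`(1 - t) log (1 - t) ≥ -t`. The linear terms cancel after weighting by `1/q` and `(q - 1)/q`,
leaving `((q - 1) t)² / (2qx) ≥ t² / (3q)`; changing to base 2 divides by `log 2 < 1`.
-/

theorem add_sq_div_two_le_neg_log_one_sub {y : ℝ} (h0 : 0 ≤ y) (h1 : y < 1) :
    y + y ^ 2 / 2 ≤ -log (1 - y) := by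
  have hs := hasSum_pow_div_log_of_abs_lt_one (x := y) (by rwa [abs_of_nonneg h0])
  have := sum_le_hasSum (range 2) (fun n _ => by positivity) hs
  norm_num [sum_range_succ] at this
  exact this

theorem one_sub_inv_add_sq_div_two_le_log {x : ℝ} (hx : 1 ≤ x) :
    (1 - x⁻¹) + (1 - x⁻¹) ^ 2 / 2 ≤ log x := by
  have hx0 : 0 < x := by linarith
  have := add_sq_div_two_le_neg_log_one_sub (y := 1 - x⁻¹) (by simp [inv_le_one_of_one_le₀ hx])
    (by simpa using hx0)
  simpa [log_inv] using this

theorem sq_div_three_le_mul_log_add_mul_log {q t : ℝ} (hq : 2 ≤ q) (ht0 : 0 ≤ t)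
    (hqt : (q - 1) * t ≤ 1 / 2) (ht1 : t < 1) :
    t ^ 2 / (3 * q) ≤
      1 / q * (1 + (q - 1) * t) * log (1 + (q - 1) * t) +
        (q - 1) / q * (1 - t) * log (1 - t) := by
  set a := (q - 1) * t with ha
  have hta : t ≤ a := by nlinarith
  have hx : 1 ≤ 1 + a := by linarith
  have hx0 : 0 < 1 + a := by linarith
  have hq0 : 0 < q := by linarith
  have hxlog : a + a ^ 2 / (2 * (1 + a)) ≤ (1 + a) * log (1 + a) :=
    calc a + a ^ 2 / (2 * (1 + a))
        = (1 + a) * ((1 - (1 + a)⁻¹) + (1 - (1 + a)⁻¹) ^ 2 / 2) := by field_simp; ring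
      _ ≤ _ := mul_le_mul_of_nonneg_left (one_sub_inv_add_sq_div_two_le_log hx) hx0.le
  have htlog : -t ≤ (1 - t) * log (1 - t) :=
    calc -t = (1 - t) * (1 - (1 - t)⁻¹) := by field_simp [show 1 - t ≠ 0 by linarith]; ring
      _ ≤ _ := mul_le_mul_of_nonneg_left (one_sub_inv_le_log_of_pos (by linarith)) (by linarith)
  calc t ^ 2 / (3 * q)
      ≤ a ^ 2 / (2 * (1 + a) * q) := by
        rw [div_le_div_iff₀ (by positivity) (by positivity)]; nlinarith
    _ = 1 / q * (a + a ^ 2 / (2 * (1 + a))) + (q - 1) / q * -t := by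
        rw [ha]; field_simp; ring
    _ ≤ 1 / q * ((1 + a) * log (1 + a)) + (q - 1) / q * ((1 - t) * log (1 - t)) := by
        gcongr
        exact div_nonneg (by linarith) hq0.le
    _ = _ := by ring

/-- Quantitative lower bound on the mutual-information expression: there is an
absolute constant `c > 0` such that for all integers `q ≥ 2` and reals `0 ≤ t ≤ 1`
with `t ≤ 1/(2q)`,
`(1/q)(1+(q−1)t)log₂(1+(q−1)t) + ((q−1)/q)(1−t)log₂(1−t) ≥ c t²/q`. -/
theorem stmt18 :
    ∃ c : ℝ, 0 < c ∧ ∀ (q : ℕ) (t : ℝ), 2 ≤ q → 0 ≤ t → t ≤ 1 → t ≤ 1 / (2 * q) →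
      c * t ^ 2 / q ≤
        1 / q * (1 + ((q : ℝ) - 1) * t) * Real.logb 2 (1 + ((q : ℝ) - 1) * t) +
          ((q : ℝ) - 1) / q * (1 - t) * Real.logb 2 (1 - t) := by
  refine ⟨1 / 3, by norm_num, fun q t hq ht0 _ htq => ?_⟩
  have hq2 : (2 : ℝ) ≤ q := by exact_mod_cast hq
  have hqt : ((q : ℝ) - 1) * t ≤ 1 / 2 := by
    rw [le_div_iff₀ (by positivity)] at htq
    nlinarith
  have ht1 : t < 1 := by nlinarith
  have hnat := sq_div_three_le_mul_log_add_mul_log hq2 ht0 hqt ht1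
  have hlog2 : log 2 ≤ 1 := by linarith [log_le_sub_one_of_pos (zero_lt_two' ℝ)]
  calc 1 / 3 * t ^ 2 / q = t ^ 2 / (3 * q) := by ring
    _ ≤ (1 / q * (1 + (q - 1) * t) * log (1 + (q - 1) * t) +
          (q - 1) / q * (1 - t) * log (1 - t)) / log 2 :=
        hnat.trans (le_div_self ((by positivity : (0:ℝ) ≤ t ^ 2 / (3 * q)).trans hnat)
          (log_pos one_lt_two) hlog2)
    _ = _ := by simp only [logb]; ring
end
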